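/- arXiv:2302.09806 — 3 statements merged into one kernel-verified Lean document; each statement's English description precedes it below -/
import Mathlib

section
/- Let (β_t)_{t≥0} be a monotonically non-increasing sequence in [0,1] and T ≥ 1. With α_t := β_t · ∏_{l=t+1}^{(k+1)T-1} (1 - β_l) and α_(k) := ∑_{t=kT}^{(k+1)T-1} α_t, we have β_{(k+1)T-1} ≤ α_(k) ≤ T · β_{kT} for every k. -/
open Finset

/-- The paper's `α_t` for the epoch whose last step is `b - 1`. -/
noncomputable def epochWeight (β : ℕ → ℝ) (b t : ℕ) : ℝ :=
  β t * ∏ l ∈ Ico (t + 1) b, (1 - β l)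

section

variable {β : ℕ → ℝ}

lemma prod_one_sub_mem_Icc (hβ : ∀ t, β t ∈ Set.Icc (0 : ℝ) 1) (s : Finset ℕ) :
    ∏ l ∈ s, (1 - β l) ∈ Set.Icc (0 : ℝ) 1 :=
  ⟨prod_nonneg fun l _ => sub_nonneg.2 (hβ l).2,
    prod_le_one (fun l _ => sub_nonneg.2 (hβ l).2) fun l _ => sub_le_self _ (hβ l).1⟩

lemma epochWeight_nonneg (hβ : ∀ t, β t ∈ Set.Icc (0 : ℝ) 1) (b t : ℕ) :
    0 ≤ epochWeight β b t :=
  mul_nonneg (hβ t).1 (prod_one_sub_mem_Icc hβ _).1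

lemma epochWeight_le (hβ : ∀ t, β t ∈ Set.Icc (0 : ℝ) 1) (b t : ℕ) :
    epochWeight β b t ≤ β t :=
  mul_le_of_le_one_right (hβ t).1 (prod_one_sub_mem_Icc hβ _).2

lemma epochWeight_pred {b : ℕ} (hb : 1 ≤ b) : epochWeight β b (b - 1) = β (b - 1) := by
  rw [epochWeight, Nat.sub_add_cancel hb, Ico_self, prod_empty, mul_one]

lemma le_sum_epochWeight (hβ : ∀ t, β t ∈ Set.Icc (0 : ℝ) 1) {a b : ℕ} (hab : a < b) :
    β (b - 1) ≤ ∑ t ∈ Ico a b, epochWeight β b t := by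
  have hlast : b - 1 ∈ Ico a b := mem_Ico.2 ⟨by omega, by omega⟩
  calc β (b - 1) = epochWeight β b (b - 1) := (epochWeight_pred (by omega)).symm
    _ ≤ ∑ t ∈ Ico a b, epochWeight β b t :=
      single_le_sum (fun t _ => epochWeight_nonneg hβ b t) hlast

lemma sum_epochWeight_le (hβ : ∀ t, β t ∈ Set.Icc (0 : ℝ) 1) (hanti : Antitone β) (a b : ℕ) :
    ∑ t ∈ Ico a b, epochWeight β b t ≤ ((b - a : ℕ) : ℝ) * β a := by
  calc ∑ t ∈ Ico a b, epochWeight β b t ≤ #(Ico a b) • β a :=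
        sum_le_card_nsmul _ _ _ fun t ht =>
          (epochWeight_le hβ b t).trans (hanti (mem_Ico.1 ht).1)
    _ = ((b - a : ℕ) : ℝ) * β a := by rw [Nat.card_Ico, nsmul_eq_mul]

end

theorem stmt1 (β : ℕ → ℝ) (hβ : ∀ t, β t ∈ Set.Icc (0:ℝ) 1)
    (hmono : ∀ s t, s ≤ t → β t ≤ β s)
    (T : ℕ) (hT : 1 ≤ T) (k : ℕ) :
    β ((k+1)*T - 1)
      ≤ (∑ t ∈ Finset.Ico (k*T) ((k+1)*T),
          β t * ∏ l ∈ Finset.Ico (t+1) ((k+1)*T), (1 - β l)) ∧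
    (∑ t ∈ Finset.Ico (k*T) ((k+1)*T),
        β t * ∏ l ∈ Finset.Ico (t+1) ((k+1)*T), (1 - β l))
      ≤ (T : ℝ) * β (k*T) := by
  have hlen : (k + 1) * T - k * T = T := by rw [add_one_mul, Nat.add_sub_cancel_left]
  refine ⟨le_sum_epochWeight hβ ?_, ?_⟩
  · rw [add_one_mul]
    omega
  · have h := sum_epochWeight_le hβ hmono (k * T) ((k + 1) * T)
    rwa [hlen] at h
end

section
/- Let (β_t)_{t≥0} be a monotonically non-increasing sequence in [0,1] with ∑_t β_t = ∞ and ∑_t β_t² < ∞, and let T ≥ 1. Define α_(k) := 1 - ∏_{t=kT}^{(k+1)T-1} (1 - β_t). Then ∑_{k=0}^∞ α_(k) = ∞ and ∑_{k=0}^∞ α_(k)² < ∞. -/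
/-!
On the `k`-th block `[kT, (k+1)T)` monotonicity and the Weierstrass product inequality
`1 - ∑ βₜ ≤ ∏ (1 - βₜ)` give `β_{kT} ≤ α_(k) ≤ ∑_{block} βₜ ≤ T β_{kT}`. Hence
`∑_{k<n} α_(k) ≥ T⁻¹ ∑_{t<nT} βₜ → ∞`, and `α_(k)² ≤ T² β_{kT}²` is dominated by a
subsequence of the summable sequence `βₜ²`.
-/

open Finset Filter

namespace Finset

theorem one_sub_sum_le_prod_one_sub {ι R : Type*} [CommRing R] [LinearOrder R]
    [IsStrictOrderedRing R] (s : Finset ι) {f : ι → R}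
    (hf : ∀ i ∈ s, f i ∈ Set.Icc (0 : R) 1) :
    1 - ∑ i ∈ s, f i ≤ ∏ i ∈ s, (1 - f i) := by
  classical
  induction s using Finset.induction with
  | empty => simp
  | insert a s ha ih =>
    rw [sum_insert ha, prod_insert ha]
    obtain ⟨ha₀, ha₁⟩ := hf a (mem_insert_self a s)
    have hs := ih fun i hi => hf i (mem_insert_of_mem hi)
    have hsum : 0 ≤ ∑ i ∈ s, f i := sum_nonneg fun i hi => (hf i (mem_insert_of_mem hi)).1
    nlinarith

theorem prod_one_sub_le_one_sub_of_mem {ι R : Type*} [CommRing R] [PartialOrder R]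
    [IsOrderedRing R] {s : Finset ι} {f : ι → R} (hf : ∀ i ∈ s, f i ∈ Set.Icc (0 : R) 1)
    {a : ι} (ha : a ∈ s) :
    ∏ i ∈ s, (1 - f i) ≤ 1 - f a := by
  classical
  rw [← mul_prod_erase s _ ha]
  exact mul_le_of_le_one_right (sub_nonneg.2 (hf a ha).2)
    (prod_le_one (fun i hi => sub_nonneg.2 (hf i (mem_of_mem_erase hi)).2)
      fun i hi => sub_le_self _ (hf i (mem_of_mem_erase hi)).1)

theorem sum_range_sum_Ico_mul {M : Type*} [AddCommMonoid M] (f : ℕ → M) (T n : ℕ) :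
    ∑ k ∈ range n, ∑ t ∈ Ico (k * T) ((k + 1) * T), f t = ∑ t ∈ range (n * T), f t := by
  induction n with
  | zero => simp
  | succ n ih =>
    rw [sum_range_succ, ih, range_eq_Ico, range_eq_Ico,
      sum_Ico_consecutive f (Nat.zero_le _) (Nat.mul_le_mul_right T n.le_succ)]

end Finset

/-- The paper's `α_(k)`, the step size aggregated over the `k`-th block of length `T`. -/
noncomputable def blockStepSize (β : ℕ → ℝ) (T k : ℕ) : ℝ :=
  1 - ∏ t ∈ Ico (k * T) ((k + 1) * T), (1 - β t)

section blockStepSize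

variable {β : ℕ → ℝ} {T : ℕ}

theorem le_blockStepSize (hβ : ∀ t, β t ∈ Set.Icc (0 : ℝ) 1) (hT : 0 < T) (k : ℕ) :
    β (k * T) ≤ blockStepSize β T k := by
  have hmem : k * T ∈ Ico (k * T) ((k + 1) * T) := by
    simp only [mem_Ico, le_refl, true_and]
    nlinarith
  have := prod_one_sub_le_one_sub_of_mem (fun t _ => hβ t) hmem
  unfold blockStepSize
  linarith

theorem sum_Ico_le_mul_of_antitone (hanti : Antitone β) (k : ℕ) :
    ∑ t ∈ Ico (k * T) ((k + 1) * T), β t ≤ T * β (k * T) := by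
  have := sum_le_card_nsmul (Ico (k * T) ((k + 1) * T)) β (β (k * T))
    fun t ht => hanti (mem_Ico.1 ht).1
  simpa [Nat.card_Ico, Nat.add_mul, nsmul_eq_mul] using this

theorem blockStepSize_le (hβ : ∀ t, β t ∈ Set.Icc (0 : ℝ) 1) (hanti : Antitone β) (k : ℕ) :
    blockStepSize β T k ≤ T * β (k * T) := by
  have := one_sub_sum_le_prod_one_sub (Ico (k * T) ((k + 1) * T)) fun t _ => hβ t
  have := sum_Ico_le_mul_of_antitone (T := T) hanti k
  unfold blockStepSize
  linarith

theorem tendsto_sum_blockStepSize_atTop (hβ : ∀ t, β t ∈ Set.Icc (0 : ℝ) 1)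
    (hanti : Antitone β) (hdiv : Tendsto (fun n => ∑ t ∈ range n, β t) atTop atTop)
    (hT : 0 < T) :
    Tendsto (fun n => ∑ k ∈ range n, blockStepSize β T k) atTop atTop := by
  have hTpos : (0 : ℝ) < T := by exact_mod_cast hT
  have hpartial : Tendsto (fun n => ∑ t ∈ range (n * T), β t) atTop atTop :=
    hdiv.comp (tendsto_atTop_mono (fun n => Nat.le_mul_of_pos_right n hT) tendsto_id)
  refine tendsto_atTop_mono (fun n => ?_) (hpartial.const_mul_atTop (inv_pos.2 hTpos))
  rw [← sum_range_sum_Ico_mul, mul_sum]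
  refine sum_le_sum fun k _ => ?_
  calc (T : ℝ)⁻¹ * ∑ t ∈ Ico (k * T) ((k + 1) * T), β t ≤ (T : ℝ)⁻¹ * (T * β (k * T)) :=
        mul_le_mul_of_nonneg_left (sum_Ico_le_mul_of_antitone hanti k) (by positivity)
    _ = β (k * T) := by field_simp
    _ ≤ blockStepSize β T k := le_blockStepSize hβ hT k

theorem summable_blockStepSize_sq (hβ : ∀ t, β t ∈ Set.Icc (0 : ℝ) 1) (hanti : Antitone β)
    (hsq : Summable fun t => β t ^ 2) (hT : 0 < T) :
    Summable fun k => blockStepSize β T k ^ 2 := by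
  have hsub : Summable fun k => (T : ℝ) ^ 2 * β (k * T) ^ 2 :=
    (hsq.comp_injective (mul_left_injective₀ hT.ne')).mul_left _
  refine hsub.of_nonneg_of_le (fun k => sq_nonneg _) fun k => ?_
  have hnonneg : 0 ≤ blockStepSize β T k := (hβ _).1.trans (le_blockStepSize hβ hT k)
  rw [← mul_pow]
  exact pow_le_pow_left₀ hnonneg (blockStepSize_le hβ hanti k) 2

end blockStepSize

theorem stmt2 (β : ℕ → ℝ) (hβ : ∀ t, β t ∈ Set.Icc (0:ℝ) 1)
    (hmono : ∀ s t, s ≤ t → β t ≤ β s)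
    (hdiv : Filter.Tendsto (fun n => ∑ t ∈ Finset.range n, β t)
      Filter.atTop Filter.atTop)
    (hsq : Summable (fun t => (β t)^2))
    (T : ℕ) (hT : 1 ≤ T) :
    Filter.Tendsto
      (fun n => ∑ k ∈ Finset.range n,
        (1 - ∏ t ∈ Finset.Ico (k*T) ((k+1)*T), (1 - β t)))
      Filter.atTop Filter.atTop ∧
    Summable (fun k => (1 - ∏ t ∈ Finset.Ico (k*T) ((k+1)*T), (1 - β t))^2) := by
  have hanti : Antitone β := fun s t hst => hmono s t hst
  exact ⟨tendsto_sum_blockStepSize_atTop hβ hanti hdiv hT,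
    summable_blockStepSize_sq hβ hanti hsq hT⟩
end

section
/- Let (β_t) be a sequence in [0,1] satisfying β_t − β_{t+1} ≥ β_t·β_{t+1} for all t (no recency bias), and fix an epoch [kT, (k+1)T). Define α_t := β_t · ∏_{l=t+1}^{(k+1)T-1} (1 − β_l). Then the weights α_t are monotonically non-increasing in t on the epoch: α_t ≥ α_{t+1} for all t ∈ [kT, (k+1)T−1). -/
theorem mul_prod_Ico_one_sub_le_of_sub_ge_mul {R : Type*} [CommRing R] [PartialOrder R]
    [IsOrderedRing R] (β : ℕ → R) {t n : ℕ} (ht : t + 1 < n)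
    (hβ_le_one : ∀ l ∈ Finset.Ico (t + 2) n, β l ≤ 1)
    (hnrb : β t - β (t + 1) ≥ β t * β (t + 1)) :
    β (t + 1) * ∏ l ∈ Finset.Ico (t + 2) n, (1 - β l)
      ≤ β t * ∏ l ∈ Finset.Ico (t + 1) n, (1 - β l) := by
  have hstep : β (t + 1) ≤ β t * (1 - β (t + 1)) := by
    rw [mul_one_sub]
    exact le_sub_comm.mp hnrb
  have htail : 0 ≤ ∏ l ∈ Finset.Ico (t + 2) n, (1 - β l) :=
    Finset.prod_nonneg fun l hl => sub_nonneg.mpr (hβ_le_one l hl)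
  rw [Finset.prod_eq_prod_Ico_succ_bot ht, ← mul_assoc]
  exact mul_le_mul_of_nonneg_right hstep htail

theorem stmt4_general (β : ℕ → ℝ) (hβ : ∀ t, β t ∈ Set.Icc (0:ℝ) 1)
    (hnrb : ∀ t, β t - β (t+1) ≥ β t * β (t+1))
    (T k : ℕ) :
    ∀ t, k*T ≤ t → t + 1 < (k+1)*T →
      β (t+1) * ∏ l ∈ Finset.Ico (t+2) ((k+1)*T), (1 - β l)
        ≤ β t * ∏ l ∈ Finset.Ico (t+1) ((k+1)*T), (1 - β l) := by
  intro t _ ht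
  exact mul_prod_Ico_one_sub_le_of_sub_ge_mul β ht (fun l _ => (hβ l).2) (hnrb t)

theorem stmt4 (β : ℕ → ℝ) (hβ : ∀ t, β t ∈ Set.Icc (0:ℝ) 1)
    (hnrb : ∀ t, β t - β (t+1) ≥ β t * β (t+1))
    (T k : ℕ) (hT : 1 ≤ T) :
    ∀ t, k*T ≤ t → t + 1 < (k+1)*T →
      β (t+1) * ∏ l ∈ Finset.Ico (t+2) ((k+1)*T), (1 - β l)
        ≤ β t * ∏ l ∈ Finset.Ico (t+1) ((k+1)*T), (1 - β l) :=
  stmt4_general β hβ hnrb T k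
end
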